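/- Outcome-weighted scoring rules preserve properness on the support of the weight: let ℓ be a proper scoring rule on finite X and ω : X → [0,1] a weight function. Define ℓ_ω(y,x) := ω(x)·ℓ(y_ω, x) where y_ω(x') := ω(x')y(x') / Σ_{x''} ω(x'')y(x'') (assuming the denominator is positive). Then for all probability mass functions y*, ŷ with Σ ω·y* > 0 and Σ ω·ŷ > 0, Σ_x y*(x)·ℓ_ω(y*,x) ≤ Σ_x y*(x)·ℓ_ω(ŷ,x). -/

import Mathlib

theorem weighted_scoring_rule_proper {X : Type*} [Fintype X] [Nonempty X]
    (ℓ : (X → ℝ) → X → ℝ)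
    (hproper : ∀ p q : X → ℝ, (∀ x, 0 ≤ p x) → (∑ x, p x = 1) →
      (∀ x, 0 ≤ q x) → (∑ x, q x = 1) →
      ∑ x, p x * ℓ p x ≤ ∑ x, p x * ℓ q x)
    (ω : X → ℝ) (hω : ∀ x, ω x ∈ Set.Icc (0:ℝ) 1)
    (ystar yhat : X → ℝ)
    (hys : ∀ x, 0 ≤ ystar x) (hsums : ∑ x, ystar x = 1)
    (hyh : ∀ x, 0 ≤ yhat x) (hsumh : ∑ x, yhat x = 1)
    (hposs : 0 < ∑ x, ω x * ystar x) (hposh : 0 < ∑ x, ω x * yhat x) :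
    ∑ x, ystar x * (ω x * ℓ (fun x' => ω x' * ystar x' / ∑ x'', ω x'' * ystar x'') x) ≤
    ∑ x, ystar x * (ω x * ℓ (fun x' => ω x' * yhat x' / ∑ x'', ω x'' * yhat x'') x) := by
  set S : ℝ := ∑ x, ω x * ystar x with hS
  set T : ℝ := ∑ x, ω x * yhat x with hT
  set p : X → ℝ := fun x' => ω x' * ystar x' / S with hp
  set q : X → ℝ := fun x' => ω x' * yhat x' / T with hq
  have hpnn : ∀ x, 0 ≤ p x := fun x =>
    div_nonneg (mul_nonneg (hω x).1 (hys x)) hposs.le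
  have hqnn : ∀ x, 0 ≤ q x := fun x =>
    div_nonneg (mul_nonneg (hω x).1 (hyh x)) hposh.le
  have hpsum : ∑ x, p x = 1 := by
    simp only [hp, div_eq_mul_inv, ← Finset.sum_mul]
    field_simp
    exact hS.symm
  have hqsum : ∑ x, q x = 1 := by
    simp only [hq, div_eq_mul_inv, ← Finset.sum_mul]
    field_simp
    exact hT.symm
  have key := hproper p q hpnn hpsum hqnn hqsum
  have hrw : ∀ r : X → ℝ, ∑ x, ystar x * (ω x * ℓ r x) = S * ∑ x, p x * ℓ r x := by
    intro r
    rw [Finset.mul_sum]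
    refine Finset.sum_congr rfl fun x _ => ?_
    simp only [hp]
    field_simp
  rw [hrw, hrw]
  exact mul_le_mul_of_nonneg_left key hposs.le
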